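/- Let Ψ : ℝ² → ℝ be smooth in variables (a,b) with Ψ_{ab} = −Ψ/4, let W : ℝ → ℝ be differentiable, let U ⊆ ℝ² be open, and let r¹, r², r³ : U → ℝ be differentiable such that for every (t,x) ∈ U, evaluating Ψ and its derivatives at (r¹(t,x), r²(t,x)): t = −e^{(r²−r¹)/2}(Ψ_a + Ψ_b), x = e^{(r²−r¹)/2}((2Ψ_a + Ψ) − (r¹+r²+1)(Ψ_a + Ψ_b)), r³ = W(e^{(r¹−r²)/2}(Ψ_a − Ψ_b − Ψ)), and moreover 4Ψ_{aa} − 2Ψ_a − 2Ψ_b − Ψ ≠ 0 and 4Ψ_{bb} + 2Ψ_b + 2Ψ_a − Ψ ≠ 0 at (r¹(t,x), r²(t,x)). Then (r¹,r²,r³) solves the diagonalized drift flux system (S) on U (the regular solution family). -/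

import Mathlib

/- STATEMENT 4: the regular solution family of the diagonalized drift flux
system (S), parameterized by a solution Ψ of the Klein–Gordon equation
Ψ_{ab} = −Ψ/4 and an arbitrary differentiable function W. -/

noncomputable section

/-- Partial derivative with respect to the first ("time") variable. -/
def pt (f : ℝ × ℝ → ℝ) (p : ℝ × ℝ) : ℝ := fderiv ℝ f p (1, 0)

/-- Partial derivative with respect to the second ("space") variable. -/
def px (f : ℝ × ℝ → ℝ) (p : ℝ × ℝ) : ℝ := fderiv ℝ f p (0, 1)

/-- Partial derivative with respect to the first argument (a). -/
def pa (f : ℝ × ℝ → ℝ) (q : ℝ × ℝ) : ℝ := fderiv ℝ f q (1, 0)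

/-- Partial derivative with respect to the second argument (b). -/
def pb (f : ℝ × ℝ → ℝ) (q : ℝ × ℝ) : ℝ := fderiv ℝ f q (0, 1)

def mkL (c d : ℝ) : ℝ × ℝ →L[ℝ] ℝ :=
  c • ContinuousLinearMap.fst ℝ ℝ ℝ + d • ContinuousLinearMap.snd ℝ ℝ ℝ

lemma mkL_apply (c d : ℝ) (w : ℝ × ℝ) : mkL c d w = c * w.1 + d * w.2 := by
  simp [mkL]

lemma clm_expand (D : ℝ × ℝ →L[ℝ] ℝ) (w : ℝ × ℝ) :
    D w = w.1 * D (1, 0) + w.2 * D (0, 1) := by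
  have hw : w = w.1 • ((1:ℝ), (0:ℝ)) + w.2 • ((0:ℝ), (1:ℝ)) := by
    ext <;> simp
  calc D w = D (w.1 • ((1:ℝ), (0:ℝ)) + w.2 • ((0:ℝ), (1:ℝ))) := by rw [← hw]
    _ = w.1 * D (1, 0) + w.2 * D (0, 1) := by
        rw [map_add, map_smul, map_smul, smul_eq_mul, smul_eq_mul]

section helper
variable (Ψ : ℝ × ℝ → ℝ) (hΨ : ContDiff ℝ (⊤ : ℕ∞) Ψ) (q : ℝ × ℝ)
include hΨ

lemma hasA : HasFDerivAt (pa Ψ) ((fderiv ℝ (fderiv ℝ Ψ) q).flip (1, 0)) q := by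
  have hf2 : HasFDerivAt (fderiv ℝ Ψ) (fderiv ℝ (fderiv ℝ Ψ) q) q :=
    (((hΨ.fderiv_right (m := 1) (by exact WithTop.coe_le_coe.mpr le_top)).differentiable one_ne_zero) q).hasFDerivAt
  simpa [show pa Ψ = fun y => fderiv ℝ Ψ y (1, 0) from rfl] using hf2.clm_apply (hasFDerivAt_const ((1:ℝ), (0:ℝ)) q)

lemma hasB : HasFDerivAt (pb Ψ) ((fderiv ℝ (fderiv ℝ Ψ) q).flip (0, 1)) q := by
  have hf2 : HasFDerivAt (fderiv ℝ Ψ) (fderiv ℝ (fderiv ℝ Ψ) q) q :=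
    (((hΨ.fderiv_right (m := 1) (by exact WithTop.coe_le_coe.mpr le_top)).differentiable one_ne_zero) q).hasFDerivAt
  simpa [show pb Ψ = fun y => fderiv ℝ Ψ y (0, 1) from rfl] using hf2.clm_apply (hasFDerivAt_const ((0:ℝ), (1:ℝ)) q)

lemma paa_eq : pa (pa Ψ) q = fderiv ℝ (fderiv ℝ Ψ) q (1, 0) (1, 0) := by
  have h0 : pa (pa Ψ) q = fderiv ℝ (pa Ψ) q (1, 0) := rfl
  rw [h0, (hasA Ψ hΨ q).fderiv]; simp

lemma pba_eq : pb (pa Ψ) q = fderiv ℝ (fderiv ℝ Ψ) q (0, 1) (1, 0) := by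
  have h0 : pb (pa Ψ) q = fderiv ℝ (pa Ψ) q (0, 1) := rfl
  rw [h0, (hasA Ψ hΨ q).fderiv]; simp

lemma pab_eq : pa (pb Ψ) q = fderiv ℝ (fderiv ℝ Ψ) q (1, 0) (0, 1) := by
  have h0 : pa (pb Ψ) q = fderiv ℝ (pb Ψ) q (1, 0) := rfl
  rw [h0, (hasB Ψ hΨ q).fderiv]; simp

lemma pbb_eq : pb (pb Ψ) q = fderiv ℝ (fderiv ℝ Ψ) q (0, 1) (0, 1) := by
  have h0 : pb (pb Ψ) q = fderiv ℝ (pb Ψ) q (0, 1) := rfl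
  rw [h0, (hasB Ψ hΨ q).fderiv]; simp

omit hΨ in
lemma hasE : HasFDerivAt (fun w : ℝ × ℝ => Real.exp ((w.2 - w.1) / 2))
    (Real.exp ((q.2 - q.1) / 2) •
      ((1 / 2 : ℝ) • (ContinuousLinearMap.snd ℝ ℝ ℝ - ContinuousLinearMap.fst ℝ ℝ ℝ))) q := by
  have h1 : HasFDerivAt (fun w : ℝ × ℝ => (w.2 - w.1) / 2)
      ((1 / 2 : ℝ) • (ContinuousLinearMap.snd ℝ ℝ ℝ - ContinuousLinearMap.fst ℝ ℝ ℝ)) q := by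
    have h2 := ((hasFDerivAt_snd (𝕜 := ℝ) (E := ℝ) (F := ℝ) (p := q)).sub
      (hasFDerivAt_fst (𝕜 := ℝ) (E := ℝ) (F := ℝ) (p := q))).const_smul ((1:ℝ)/2)
    refine h2.congr_of_eventuallyEq (Filter.Eventually.of_forall fun w => ?_)
    simp [smul_eq_mul]; ring
  exact h1.exp

lemma hasT : HasFDerivAt (fun w : ℝ × ℝ => -(Real.exp ((w.2 - w.1) / 2) * (pa Ψ w + pb Ψ w)))
    (mkL (Real.exp ((q.2 - q.1) / 2) *
            ((pa Ψ q + pb Ψ q) / 2 - pa (pa Ψ) q - pa (pb Ψ) q))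
         (Real.exp ((q.2 - q.1) / 2) *
            (-(pa Ψ q + pb Ψ q) / 2 - pb (pa Ψ) q - pb (pb Ψ) q))) q := by
  have hD := ((hasE q).mul ((hasA Ψ hΨ q).add (hasB Ψ hΨ q))).neg
  have heq : mkL (Real.exp ((q.2 - q.1) / 2) *
            ((pa Ψ q + pb Ψ q) / 2 - pa (pa Ψ) q - pa (pb Ψ) q))
         (Real.exp ((q.2 - q.1) / 2) *
            (-(pa Ψ q + pb Ψ q) / 2 - pb (pa Ψ) q - pb (pb Ψ) q)) =
      -(Real.exp ((q.2 - q.1) / 2) •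
          ((fderiv ℝ (fderiv ℝ Ψ) q).flip (1, 0) + (fderiv ℝ (fderiv ℝ Ψ) q).flip (0, 1)) +
        (pa Ψ q + pb Ψ q) •
          (Real.exp ((q.2 - q.1) / 2) •
            ((1 / 2 : ℝ) • (ContinuousLinearMap.snd ℝ ℝ ℝ - ContinuousLinearMap.fst ℝ ℝ ℝ)))) := by
    refine ContinuousLinearMap.ext fun w => ?_
    rw [mkL_apply, clm_expand _ w]
    rw [paa_eq Ψ hΨ q, pab_eq Ψ hΨ q, pba_eq Ψ hΨ q, pbb_eq Ψ hΨ q]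
    simp [ContinuousLinearMap.flip_apply, smul_eq_mul]
    ring
  rw [heq]; exact hD


lemma hasX : HasFDerivAt (fun w : ℝ × ℝ => Real.exp ((w.2 - w.1) / 2) *
      ((2 * pa Ψ w + Ψ w) - (w.1 + w.2 + 1) * (pa Ψ w + pb Ψ w)))
    (mkL (Real.exp ((q.2 - q.1) / 2) *
            (-((2 * pa Ψ q + Ψ q) - (q.1 + q.2 + 1) * (pa Ψ q + pb Ψ q)) / 2
              + (2 * pa (pa Ψ) q + pa Ψ q - (pa Ψ q + pb Ψ q)
                  - (q.1 + q.2 + 1) * (pa (pa Ψ) q + pa (pb Ψ) q))))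
         (Real.exp ((q.2 - q.1) / 2) *
            (((2 * pa Ψ q + Ψ q) - (q.1 + q.2 + 1) * (pa Ψ q + pb Ψ q)) / 2
              + (2 * pb (pa Ψ) q + pb Ψ q - (pa Ψ q + pb Ψ q)
                  - (q.1 + q.2 + 1) * (pb (pa Ψ) q + pb (pb Ψ) q))))) q := by
  have hΨat : HasFDerivAt Ψ (fderiv ℝ Ψ q) q := ((hΨ.differentiable (by simp)) q).hasFDerivAt
  have hP1 : HasFDerivAt (fun w : ℝ × ℝ => w.1 + w.2 + 1)
      (ContinuousLinearMap.fst ℝ ℝ ℝ + ContinuousLinearMap.snd ℝ ℝ ℝ) q :=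
    (hasFDerivAt_fst.add hasFDerivAt_snd).add_const 1
  have hD := (hasE q).mul ((((hasA Ψ hΨ q).const_mul 2).add hΨat).sub
    (hP1.mul ((hasA Ψ hΨ q).add (hasB Ψ hΨ q))))
  refine hD.congr_fderiv ?_
  refine ContinuousLinearMap.ext fun w => ?_
  rw [clm_expand _ w, mkL_apply]
  rw [paa_eq Ψ hΨ q, pab_eq Ψ hΨ q, pba_eq Ψ hΨ q, pbb_eq Ψ hΨ q]
  simp [ContinuousLinearMap.flip_apply, smul_eq_mul]
  have hpa : fderiv ℝ Ψ q (1, 0) = pa Ψ q := rfl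
  have hpb : fderiv ℝ Ψ q (0, 1) = pb Ψ q := rfl
  rw [hpa, hpb]
  ring


omit hΨ in
lemma hasE2 : HasFDerivAt (fun w : ℝ × ℝ => Real.exp ((w.1 - w.2) / 2))
    (Real.exp ((q.1 - q.2) / 2) •
      ((1 / 2 : ℝ) • (ContinuousLinearMap.fst ℝ ℝ ℝ - ContinuousLinearMap.snd ℝ ℝ ℝ))) q := by
  have h1 : HasFDerivAt (fun w : ℝ × ℝ => (w.1 - w.2) / 2)
      ((1 / 2 : ℝ) • (ContinuousLinearMap.fst ℝ ℝ ℝ - ContinuousLinearMap.snd ℝ ℝ ℝ)) q := by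
    have h2 := ((hasFDerivAt_fst (𝕜 := ℝ) (E := ℝ) (F := ℝ) (p := q)).sub
      (hasFDerivAt_snd (𝕜 := ℝ) (E := ℝ) (F := ℝ) (p := q))).const_smul ((1:ℝ)/2)
    refine h2.congr_of_eventuallyEq (Filter.Eventually.of_forall fun w => ?_)
    simp [smul_eq_mul]; ring
  exact h1.exp

lemma hasPhi : HasFDerivAt (fun w : ℝ × ℝ => Real.exp ((w.1 - w.2) / 2) *
      (pa Ψ w - pb Ψ w - Ψ w))
    (mkL (Real.exp ((q.1 - q.2) / 2) *
            ((pa Ψ q - pb Ψ q - Ψ q) / 2 + (pa (pa Ψ) q - pa (pb Ψ) q - pa Ψ q)))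
         (Real.exp ((q.1 - q.2) / 2) *
            (-(pa Ψ q - pb Ψ q - Ψ q) / 2 + (pb (pa Ψ) q - pb (pb Ψ) q - pb Ψ q)))) q := by
  have hΨat : HasFDerivAt Ψ (fderiv ℝ Ψ q) q := ((hΨ.differentiable (by simp)) q).hasFDerivAt
  have hD := (hasE2 q).mul (((hasA Ψ hΨ q).sub (hasB Ψ hΨ q)).sub hΨat)
  refine hD.congr_fderiv ?_
  refine ContinuousLinearMap.ext fun w => ?_
  rw [clm_expand _ w, mkL_apply]
  rw [paa_eq Ψ hΨ q, pab_eq Ψ hΨ q, pba_eq Ψ hΨ q, pbb_eq Ψ hΨ q]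
  simp [ContinuousLinearMap.flip_apply, smul_eq_mul]
  have hpa : fderiv ℝ Ψ q (1, 0) = pa Ψ q := rfl
  have hpb : fderiv ℝ Ψ q (0, 1) = pb Ψ q := rfl
  rw [hpa, hpb]
  ring

lemma sym_eq : pa (pb Ψ) q = pb (pa Ψ) q := by
  rw [pab_eq Ψ hΨ q, pba_eq Ψ hΨ q]
  have hf2 : HasFDerivAt (fderiv ℝ Ψ) (fderiv ℝ (fderiv ℝ Ψ) q) q :=
    (((hΨ.fderiv_right (m := 1) (by exact WithTop.coe_le_coe.mpr le_top)).differentiable one_ne_zero) q).hasFDerivAt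
  exact second_derivative_symmetric (fun y => ((hΨ.differentiable (by simp)) y).hasFDerivAt) hf2 _ _

end helper

theorem regular_solution_family
    (Ψ : ℝ × ℝ → ℝ) (hΨ : ContDiff ℝ (⊤ : ℕ∞) Ψ)
    (hKG : ∀ q : ℝ × ℝ, pb (pa Ψ) q = -Ψ q / 4)
    (W : ℝ → ℝ) (hW : Differentiable ℝ W)
    (U : Set (ℝ × ℝ)) (hU : IsOpen U)
    (r₁ r₂ r₃ : ℝ × ℝ → ℝ)
    (hr₁ : ∀ p ∈ U, DifferentiableAt ℝ r₁ p)
    (hr₂ : ∀ p ∈ U, DifferentiableAt ℝ r₂ p)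
    (hr₃ : ∀ p ∈ U, DifferentiableAt ℝ r₃ p)
    (hT : ∀ p ∈ U, p.1 =
      -Real.exp ((r₂ p - r₁ p) / 2) * (pa Ψ (r₁ p, r₂ p) + pb Ψ (r₁ p, r₂ p)))
    (hX : ∀ p ∈ U, p.2 =
      Real.exp ((r₂ p - r₁ p) / 2) *
        ((2 * pa Ψ (r₁ p, r₂ p) + Ψ (r₁ p, r₂ p)) -
          (r₁ p + r₂ p + 1) * (pa Ψ (r₁ p, r₂ p) + pb Ψ (r₁ p, r₂ p))))
    (hR : ∀ p ∈ U, r₃ p =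
      W (Real.exp ((r₁ p - r₂ p) / 2) *
        (pa Ψ (r₁ p, r₂ p) - pb Ψ (r₁ p, r₂ p) - Ψ (r₁ p, r₂ p))))
    (hnd₁ : ∀ p ∈ U,
      4 * pa (pa Ψ) (r₁ p, r₂ p) - 2 * pa Ψ (r₁ p, r₂ p)
        - 2 * pb Ψ (r₁ p, r₂ p) - Ψ (r₁ p, r₂ p) ≠ 0)
    (hnd₂ : ∀ p ∈ U,
      4 * pb (pb Ψ) (r₁ p, r₂ p) + 2 * pb Ψ (r₁ p, r₂ p)
        + 2 * pa Ψ (r₁ p, r₂ p) - Ψ (r₁ p, r₂ p) ≠ 0) :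
    ∀ p ∈ U,
      pt r₁ p + (r₁ p + r₂ p + 1) * px r₁ p = 0 ∧
      pt r₂ p + (r₁ p + r₂ p - 1) * px r₂ p = 0 ∧
      pt r₃ p + (r₁ p + r₂ p) * px r₃ p = 0 := by
  intro p hp
  -- the transfer principle
  have key : ∀ (F : ℝ × ℝ → ℝ) (DF : ℝ × ℝ →L[ℝ] ℝ),
      HasFDerivAt F DF (r₁ p, r₂ p) →
      ∀ (G : ℝ × ℝ → ℝ) (DG : ℝ × ℝ →L[ℝ] ℝ), HasFDerivAt G DG p →
      (∀ y ∈ U, G y = F (r₁ y, r₂ y)) →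
      ∀ v : ℝ × ℝ, DG v = DF (fderiv ℝ r₁ p v, fderiv ℝ r₂ p v) := by
    intro F DF hF G DG hG hGF v
    have hRd : HasFDerivAt (fun y => (r₁ y, r₂ y))
        ((fderiv ℝ r₁ p).prod (fderiv ℝ r₂ p)) p :=
      (hr₁ p hp).hasFDerivAt.prodMk (hr₂ p hp).hasFDerivAt
    have hcomp := hF.comp p hRd
    have heq : G =ᶠ[nhds p] (F ∘ fun y => (r₁ y, r₂ y)) := by
      filter_upwards [hU.mem_nhds hp] with y hy using hGF y hy
    have h2 := hcomp.congr_of_eventuallyEq heq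
    have h3 := hG.unique h2
    rw [h3]
    rfl
  set q : ℝ × ℝ := (r₁ p, r₂ p) with hqdef
  -- the four structural equations
  have eT := key _ _ (hasT Ψ hΨ q) Prod.fst (ContinuousLinearMap.fst ℝ ℝ ℝ)
    hasFDerivAt_fst (fun y hy => by simpa [neg_mul] using hT y hy)
  have eX := key _ _ (hasX Ψ hΨ q) Prod.snd (ContinuousLinearMap.snd ℝ ℝ ℝ)
    hasFDerivAt_snd (fun y hy => by simpa using hX y hy)
  have hΦq := hasPhi Ψ hΨ q
  have hWΦ := (hW _).hasDerivAt.comp_hasFDerivAt q hΦq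
  have eR := key _ _ hWΦ r₃ (fderiv ℝ r₃ p) (hr₃ p hp).hasFDerivAt
    (fun y hy => by simpa using hR y hy)
  have e1 := eT (1, 0)
  have e2 := eT (0, 1)
  have e3 := eX (1, 0)
  have e4 := eX (0, 1)
  have e5 := eR (1, 0)
  have e6 := eR (0, 1)
  simp only [mkL_apply, ContinuousLinearMap.coe_fst', ContinuousLinearMap.coe_snd',
    ContinuousLinearMap.smul_apply, smul_eq_mul] at e1 e2 e3 e4 e5 e6
  -- instantiate pointwise facts
  have hnd1' := hnd₁ p hp
  have hnd2' := hnd₂ p hp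
  rw [← hqdef] at hnd1' hnd2'
  have hKGq := hKG q
  have hsymq := sym_eq Ψ hΨ q
  -- abbreviations
  set ψ := Ψ q with hψdef
  set A := pa Ψ q with hAdef
  set B := pb Ψ q with hBdef
  set Paa := pa (pa Ψ) q with hPaadef
  set Pab := pb (pa Ψ) q with hPabdef
  set Pba := pa (pb Ψ) q with hPbadef
  set Pbb := pb (pb Ψ) q with hPbbdef
  set E := Real.exp ((r₂ p - r₁ p) / 2) with hEdef
  set E2 := Real.exp ((r₁ p - r₂ p) / 2) with hE2def
  set dW := deriv W (E2 * (A - B - ψ)) with hdWdef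
  set A1 := fderiv ℝ r₁ p (1, 0) with hA1def
  set A2 := fderiv ℝ r₂ p (1, 0) with hA2def
  set B1 := fderiv ℝ r₁ p (0, 1) with hB1def
  set B2 := fderiv ℝ r₂ p (0, 1) with hB2def
  set a := r₁ p with hadef
  set b := r₂ p with hbdef
  rw [hsymq, hKGq] at e1 e2 e3 e4 e5 e6
  have hEne : E ≠ 0 := by rw [hEdef]; exact Real.exp_ne_zero _
  have hE2ne : E2 ≠ 0 := by rw [hE2def]; exact Real.exp_ne_zero _
  have hEE : E * E2 = 1 := by
    rw [hEdef, hE2def, ← Real.exp_add,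
      show (b - a) / 2 + (a - b) / 2 = 0 by ring, Real.exp_zero]
  have hTa0 : E * ((A + B) / 2 - Paa - -ψ / 4) ≠ 0 := by
    intro h
    rcases mul_eq_zero.mp h with h | h
    · exact hEne h
    · apply hnd1'; linarith
  have hTb0 : E * (-(A + B) / 2 - -ψ / 4 - Pbb) ≠ 0 := by
    intro h
    rcases mul_eq_zero.mp h with h | h
    · exact hEne h
    · apply hnd2'; linarith
  have t1 : E * ((A + B) / 2 - Paa - -ψ / 4) * (A1 + (a + b + 1) * B1) = 0 := by
    linear_combination (-(a + b + 1) / 2) * e1 + (1 / 2) * e3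
      + (-(a + b + 1) ^ 2 / 2) * e2 + ((a + b + 1) / 2) * e4
  have t2 : E * (-(A + B) / 2 - -ψ / 4 - Pbb) * (A2 + (a + b - 1) * B2) = 0 := by
    linear_combination ((a + b - 1) / 2) * e1 + (-1 / 2) * e3
      + ((a + b - 1) ^ 2 / 2) * e2 + (-(a + b - 1) / 2) * e4
  have g1 : A1 + (a + b + 1) * B1 = 0 := by
    rcases mul_eq_zero.mp t1 with h | h
    · exact absurd h hTa0
    · exact h
  have g2 : A2 + (a + b - 1) * B2 = 0 := by
    rcases mul_eq_zero.mp t2 with h | h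
    · exact absurd h hTb0
    · exact h
  refine ⟨?_, ?_, ?_⟩
  · show fderiv ℝ r₁ p (1, 0) + (a + b + 1) * fderiv ℝ r₁ p (0, 1) = 0
    rw [← hA1def, ← hB1def]; exact g1
  · show fderiv ℝ r₂ p (1, 0) + (a + b - 1) * fderiv ℝ r₂ p (0, 1) = 0
    rw [← hA2def, ← hB2def]; exact g2
  · show fderiv ℝ r₃ p (1, 0) + (a + b) * fderiv ℝ r₃ p (0, 1) = 0
    rw [e5, e6]
    linear_combination (-dW * E2 * E2 * (E * ((A + B) / 2 - Paa - -ψ / 4))) * g1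
      + (dW * E2 * E2 * (E * (-(A + B) / 2 - -ψ / 4 - Pbb))) * g2
      - (dW * E2 * E2) * e2
      + (dW * E2 * (((A + B) / 2 - Paa + ψ / 4) * (A1 + (a + b) * B1)
          - (-(A + B) / 2 + ψ / 4 - Pbb) * (A2 + (a + b) * B2))) * hEE

end
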